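/- Let P be the transition matrix of an irreducible Markov chain on a finite set X and let S ⊊ X be a proper nonempty subset. Then the restriction of P to coordinates in S (the submatrix P|_{S×S}) does not have 1 as an eigenvalue; consequently (I − P|_{S×S}) is invertible. -/
import Mathlib


open scoped BigOperators

/-- For an irreducible row-stochastic matrix `P` on a finite state space `S` and a proper
nonempty subset `T ⊊ S`, the principal submatrix `P|_{T×T}` does not have `1` as an
eigenvalue; consequently `I − P|_{T×T}` is invertible. -/
theorem substochastic_no_eigenvalue_one {S : Type*} [Fintype S] [DecidableEq S]
    (P : Matrix S S ℝ)
    (hnn : ∀ x y, 0 ≤ P x y) (hrow : ∀ x, ∑ y, P x y = 1)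
    (hirr : ∀ x y : S, ∃ t : ℕ, 0 < t ∧ 0 < (P ^ t) x y)
    (T : Finset S) (hT : T.Nonempty) (hTne : T ≠ Finset.univ)
    (P' : Matrix T T ℝ) (hP' : ∀ x y, P' x y = P x.1 y.1) :
    (∀ v : T → ℝ, P'.mulVec v = v → v = 0) ∧
    IsUnit ((1 : Matrix T T ℝ) - P') := by
  -- nonnegativity of powers
  have hpow : ∀ t : ℕ, ∀ x y : S, 0 ≤ (P ^ t) x y := by
    intro t
    induction t with
    | zero =>
      intro x y
      simp [Matrix.one_apply]
      split <;> norm_num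
    | succ t ih =>
      intro x y
      rw [pow_succ, Matrix.mul_apply]
      exact Finset.sum_nonneg fun z _ => mul_nonneg (ih x z) (hnn z y)
  have key : ∀ v : T → ℝ, P'.mulVec v = v → v = 0 := by
    intro v hv
    by_contra hv0
    -- extend v by zero
    set w : S → ℝ := fun x => if h : x ∈ T then v ⟨x, h⟩ else 0 with hw
    -- w satisfies fixed point equation at points of T
    have hfix : ∀ x : S, x ∈ T → ∑ y, P x y * w y = w x := by
      intro x hx
      have h1 : ∑ y, P x y * w y = ∑ y ∈ T, P x y * w y := by
        rw [Finset.sum_subset (Finset.subset_univ T)]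
        intro y _ hy
        simp [hw, hy]
      have h2 : ∑ y ∈ T, P x y * w y = ∑ y : T, P' ⟨x, hx⟩ y * v y := by
        rw [← Finset.sum_attach T (fun y => P x y * w y)]
        apply Finset.sum_congr rfl
        intro y _
        simp [hw, hP', y.2]
      have h3 : ∑ y : T, P' ⟨x, hx⟩ y * v y = v ⟨x, hx⟩ := by
        have := congrFun hv ⟨x, hx⟩
        simpa [Matrix.mulVec, dotProduct] using this
      simp only [hw, dif_pos hx]
      rw [h1, h2, h3]
    -- maximum of |w|
    obtain ⟨x0, _, hx0max⟩ := Finset.exists_max_image Finset.univ (fun x => |w x|)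
      ⟨hT.choose, Finset.mem_univ _⟩
    set M := |w x0| with hM
    have hmax : ∀ y : S, |w y| ≤ M := fun y => hx0max y (Finset.mem_univ y)
    have hMpos : 0 < M := by
      obtain ⟨i, hi⟩ := Function.ne_iff.mp hv0
      have : w i.1 = v i := by simp [hw, i.2]
      have h := hmax i.1
      rw [this] at h
      have : 0 < |v i| := abs_pos.mpr (by simpa using hi)
      linarith
    -- membership in T when |w x| = M
    have hmemT : ∀ x : S, |w x| = M → x ∈ T := by
      intro x hx
      by_contra hxT
      simp [hw, hxT] at hx
      linarith [hx.symm, hMpos]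
    -- one-step propagation of max
    have step : ∀ x y : S, |w x| = M → 0 < P x y → |w y| = M := by
      intro x y hx hxy
      have hxT := hmemT x hx
      have hle : M ≤ ∑ z, P x z * |w z| := by
        calc M = |w x| := hx.symm
        _ = |∑ z, P x z * w z| := by rw [hfix x hxT]
        _ ≤ ∑ z, |P x z * w z| := Finset.abs_sum_le_sum_abs _ _
        _ = ∑ z, P x z * |w z| := by
            apply Finset.sum_congr rfl
            intro z _
            rw [abs_mul, abs_of_nonneg (hnn x z)]
      have hzero : ∑ z, P x z * (M - |w z|) = 0 := by
        have hexp : ∑ z, P x z * (M - |w z|) = M - ∑ z, P x z * |w z| := by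
          simp only [mul_sub]
          rw [Finset.sum_sub_distrib, ← Finset.sum_mul, hrow x, one_mul]
        have hge : ∑ z, P x z * (M - |w z|) ≥ 0 := by
          apply Finset.sum_nonneg
          intro z _
          exact mul_nonneg (hnn x z) (by linarith [hmax z])
        linarith [hexp ▸ hge, hexp]
      have := (Finset.sum_eq_zero_iff_of_nonneg
        (fun z _ => mul_nonneg (hnn x z) (by linarith [hmax z]))).mp hzero y (Finset.mem_univ y)
      rcases mul_eq_zero.mp this with h | h
      · linarith
      · linarith [hmax y]
    -- t-step propagation
    have reach : ∀ t : ℕ, ∀ x y : S, |w x| = M → 0 < (P ^ t) x y → |w y| = M := by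
      intro t
      induction t with
      | zero =>
        intro x y hx hxy
        simp only [pow_zero, Matrix.one_apply] at hxy
        by_cases h : x = y
        · exact h ▸ hx
        · simp [h] at hxy
      | succ t ih =>
        intro x y hx hxy
        rw [pow_succ, Matrix.mul_apply] at hxy
        have : ∃ z, 0 < (P ^ t) x z ∧ 0 < P z y := by
          by_contra hno
          push_neg at hno
          have : ∑ z, (P ^ t) x z * P z y = 0 := by
            apply Finset.sum_eq_zero
            intro z _
            rcases lt_or_eq_of_le (hpow t x z) with h1 | h1
            · have := hno z h1
              have : P z y = 0 := le_antisymm this (hnn z y)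
              simp [this]
            · simp [← h1]
          linarith
        obtain ⟨z, hz1, hz2⟩ := this
        exact step z y (ih x z hx hz1) hz2
    -- contradiction with irreducibility
    have hz : ∃ z : S, z ∉ T := by
      by_contra h
      push_neg at h
      exact hTne (Finset.eq_univ_iff_forall.mpr h)
    obtain ⟨z, hzT⟩ := hz
    obtain ⟨t, _, hpos⟩ := hirr x0 z
    exact hzT (hmemT z (reach t x0 z rfl hpos))
  refine ⟨key, ?_⟩
  rw [Matrix.isUnit_iff_isUnit_det, isUnit_iff_ne_zero]
  intro hdet
  obtain ⟨u, hu, hu0⟩ := (Matrix.exists_mulVec_eq_zero_iff).mpr hdet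
  apply hu
  apply key
  rw [Matrix.sub_mulVec, Matrix.one_mulVec, sub_eq_zero] at hu0
  exact hu0.symm
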